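/- arXiv:1806.10909 — 2 statements merged into one kernel-verified Lean document; each statement's English description precedes it below -/
import Mathlib

section
/- Let m ≥ 0 be an integer, H > 0, δ > 0, and a_m < a_{m+1} with 2δ < a_{m+1} - a_m. Suppose R: ℝ → ℝ satisfies 0 ≤ R(x) ≤ (m+1)H for x ≤ a_m and R(x) = -((m+1)H/δ)(x - a_m) for x ≥ a_m. Define R⁺ = R + (2 + 1/(m+1))·max(0, -R), R⁺⁺ = R⁺ - 2·max(0, R⁺ - (m+2)H·(a_{m+1} - a_m)/(2δ)), and R' = min(R⁺⁺, (m+2)H). Then R'(x) = R(x) for x < a_m; R'(x) = ((m+2)H/δ)(x - a_m) for x ∈ [a_m, a_m + δ]; R'(x) = (m+2)H for x ∈ [a_m + δ, a_{m+1} - δ]; and R'(x) = -((m+2)H/δ)(x - a_{m+1}) for x ≥ a_{m+1} - δ. -/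
/-!
On `[a_m, ∞)` the input is the ramp `-s (x - a_m)` with `s = (m+1)H/δ`. The first block
reflects negative values with factor `1 + 1/(m+1)`, giving the ramp `c (x - a_m)` with
`c = (m+2)H/δ`; the second block folds it at level `T = c (a_{m+1} - a_m)/2`, since
`y - 2 max(0, y - T) = min(y, 2T - y)`, giving the tent `c · min(x - a_m, a_{m+1} - x)`; the
third block truncates at `(m+2)H = c δ`. On `(-∞, a_m)` the values of `R` lie in
`[0, (m+1)H]`, below both thresholds, so no block changes them.
-/

def reflectNeg (k r : ℝ) : ℝ := r + k * max 0 (-r)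

def foldAbove (T y : ℝ) : ℝ := y - 2 * max 0 (y - T)

lemma reflectNeg_of_nonneg (k : ℝ) {r : ℝ} (hr : 0 ≤ r) : reflectNeg k r = r := by
  simp [reflectNeg, max_eq_left (neg_nonpos.mpr hr)]

lemma reflectNeg_neg_mul (k : ℝ) {s t : ℝ} (hs : 0 ≤ s) (ht : 0 ≤ t) :
    reflectNeg k (-s * t) = (k - 1) * s * t := by
  rw [reflectNeg, max_eq_right (by rw [neg_mul, neg_neg]; positivity)]
  ring

lemma foldAbove_eq_min (T y : ℝ) : foldAbove T y = min y (2 * T - y) := by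
  rcases le_total y T with h | h
  · rw [foldAbove, max_eq_left (by linarith), min_eq_left (by linarith)]
    ring
  · rw [foldAbove, max_eq_right (by linarith), min_eq_right (by linarith)]
    ring

lemma min_foldAbove_reflectNeg_of_nonneg {k T M r : ℝ} (hr : 0 ≤ r) (hrT : r ≤ T)
    (hrM : r ≤ M) :
    min (foldAbove T (reflectNeg k r)) M = r := by
  rw [reflectNeg_of_nonneg k hr, foldAbove_eq_min, min_eq_left (show r ≤ 2 * T - r by linarith),
    min_eq_left hrM]

def trapezoid (c a b δ x : ℝ) : ℝ := c * min (min (x - a) (b - x)) δ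

lemma min_foldAbove_mul_sub {c : ℝ} (hc : 0 ≤ c) (a b δ x : ℝ) :
    min (foldAbove (c * (b - a) / 2) (c * (x - a))) (c * δ) = trapezoid c a b δ x := by
  rw [foldAbove_eq_min, trapezoid, mul_min_of_nonneg _ _ hc, mul_min_of_nonneg _ _ hc]
  congr 2
  ring

lemma trapezoid_of_mem_Icc_left {c a b δ x : ℝ} (hab : 2 * δ ≤ b - a)
    (hx : x ∈ Set.Icc a (a + δ)) :
    trapezoid c a b δ x = c * (x - a) := by
  rw [trapezoid, min_eq_left (show x - a ≤ b - x by linarith [hx.2]),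
    min_eq_left (by linarith [hx.2])]

lemma trapezoid_of_mem_Icc_middle {c a b δ x : ℝ} (hx : x ∈ Set.Icc (a + δ) (b - δ)) :
    trapezoid c a b δ x = c * δ := by
  rw [trapezoid, min_eq_right (le_min (by linarith [hx.1]) (by linarith [hx.2]))]

lemma trapezoid_of_sub_le {c a b δ x : ℝ} (hab : 2 * δ ≤ b - a) (hx : b - δ ≤ x) :
    trapezoid c a b δ x = c * (b - x) := by
  rw [trapezoid, min_eq_right (show b - x ≤ x - a by linarith), min_eq_left (by linarith)]

theorem trapezoid_step_general (m : ℕ) (H δ am am1 : ℝ) (hH : 0 < H) (hδ : 0 < δ)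
    (h2δ : 2 * δ < am1 - am) (R : ℝ → ℝ)
    (hRle : ∀ x : ℝ, x ≤ am → 0 ≤ R x ∧ R x ≤ ((m : ℝ) + 1) * H)
    (hRge : ∀ x : ℝ, am ≤ x → R x = -(((m : ℝ) + 1) * H / δ) * (x - am)) :
    let Rp : ℝ → ℝ := fun x => R x + (2 + 1 / ((m : ℝ) + 1)) * max 0 (-(R x))
    let Rpp : ℝ → ℝ := fun x =>
      Rp x - 2 * max 0 (Rp x - ((m : ℝ) + 2) * H * (am1 - am) / (2 * δ))
    let R' : ℝ → ℝ := fun x => min (Rpp x) (((m : ℝ) + 2) * H)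
    (∀ x : ℝ, x < am → R' x = R x) ∧
    (∀ x ∈ Set.Icc am (am + δ), R' x = ((m : ℝ) + 2) * H / δ * (x - am)) ∧
    (∀ x ∈ Set.Icc (am + δ) (am1 - δ), R' x = ((m : ℝ) + 2) * H) ∧
    (∀ x : ℝ, am1 - δ ≤ x → R' x = -(((m : ℝ) + 2) * H / δ) * (x - am1)) := by
  intro Rp Rpp R'
  set c := ((m : ℝ) + 2) * H / δ with hc_def
  have hcδ : c * δ = ((m : ℝ) + 2) * H := div_mul_cancel₀ _ hδ.ne'
  have hT : ((m : ℝ) + 2) * H * (am1 - am) / (2 * δ) = c * (am1 - am) / 2 := by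
    rw [hc_def]; ring
  have hc : 0 < c := by positivity
  have hMT : ((m : ℝ) + 2) * H ≤ c * (am1 - am) / 2 := by
    rw [← hcδ, mul_div_assoc]
    exact mul_le_mul_of_nonneg_left (by linarith) hc.le
  have hleft : ∀ x, x ≤ am → R' x = R x := fun x hx =>
    min_foldAbove_reflectNeg_of_nonneg (hRle x hx).1 (by linarith [(hRle x hx).2])
      (by linarith [(hRle x hx).2])
  have hright : ∀ x, am ≤ x → R' x = trapezoid c am am1 δ x := by
    intro x hx
    have hRp : Rp x = c * (x - am) := by
      show reflectNeg _ (R x) = _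
      rw [hRge x hx, reflectNeg_neg_mul _ (by positivity) (sub_nonneg.2 hx), hc_def]
      field_simp
      ring
    show min (foldAbove _ (Rp x)) _ = _
    rw [hRp, hT, ← hcδ]
    exact min_foldAbove_mul_sub hc.le am am1 δ x
  refine ⟨fun x hx => hleft x hx.le, fun x hx => ?_, fun x hx => ?_, fun x hx => ?_⟩
  · rw [hright x hx.1, trapezoid_of_mem_Icc_left h2δ.le hx]
  · rw [hright x (by linarith [hx.1]), trapezoid_of_mem_Icc_middle hx, hcδ]
  · rw [hright x (by linarith), trapezoid_of_sub_le h2δ.le hx]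
    ring

/-- Induction step of the sequential trapezoid construction: three one-neuron residual
blocks turn the steep negative tail of `R` on `[a_m, ∞)` into a trapezoid of height
`(m+2)H` on `[a_m, a_{m+1}]` with a new steep negative tail at `a_{m+1}`, leaving `R`
unchanged on `(-∞, a_m)`. -/
theorem trapezoid_step (m : ℕ) (H δ am am1 : ℝ) (hH : 0 < H) (hδ : 0 < δ)
    (hlt : am < am1) (h2δ : 2 * δ < am1 - am) (R : ℝ → ℝ)
    (hRle : ∀ x : ℝ, x ≤ am → 0 ≤ R x ∧ R x ≤ ((m : ℝ) + 1) * H)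
    (hRge : ∀ x : ℝ, am ≤ x → R x = -(((m : ℝ) + 1) * H / δ) * (x - am)) :
    let Rp : ℝ → ℝ := fun x => R x + (2 + 1 / ((m : ℝ) + 1)) * max 0 (-(R x))
    let Rpp : ℝ → ℝ := fun x =>
      Rp x - 2 * max 0 (Rp x - ((m : ℝ) + 2) * H * (am1 - am) / (2 * δ))
    let R' : ℝ → ℝ := fun x => min (Rpp x) (((m : ℝ) + 2) * H)
    (∀ x : ℝ, x < am → R' x = R x) ∧
    (∀ x ∈ Set.Icc am (am + δ), R' x = ((m : ℝ) + 2) * H / δ * (x - am)) ∧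
    (∀ x ∈ Set.Icc (am + δ) (am1 - δ), R' x = ((m : ℝ) + 2) * H) ∧
    (∀ x : ℝ, am1 - δ ≤ x → R' x = -(((m : ℝ) + 2) * H / δ) * (x - am1)) :=
  trapezoid_step_general m H δ am am1 hH hδ h2δ R hRle hRge
end

section
/- Let R: ℝ → ℝ be continuous with R = 0 outside a bounded interval, and for k = 1,...,M suppose R = (k+1)H on a set S_k, where H > 0 and the sets S_k are measurable, and 0 ≤ R ≤ (M+1)H everywhere. Given target values h_1,...,h_M with |h_k| ≤ H, define recursively R_M = R and R_{k-1} = R_k + ((h_k - (k+1)H)/H)·max(0, R_k - kH) for k = M down to 1. Then R_0 = h_k on S_k for every k, R_0 = 0 wherever R = 0, and -H ≤ R_0 ≤ H everywhere. -/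
open MeasureTheory

/-- The level-set adjustment procedure: starting from `R_M = R`, which equals
`(k+1)H` on each set `S_k` and satisfies `0 ≤ R ≤ (M+1)H`, the recursion
`R_{k-1} = R_k + ((h_k - (k+1)H)/H)·ReLU(R_k - kH)` (for `k = M, …, 1`) produces a
function `R_0` equal to `h_k` on each `S_k`, vanishing wherever `R` vanishes, and
bounded by `H` in absolute value. -/
theorem levelSet_adjust_procedure (M : ℕ) (H : ℝ) (hH : 0 < H)
    (R : ℝ → ℝ) (hRcont : Continuous R)
    (hRsupp : ∃ a b : ℝ, ∀ x ∉ Set.Icc a b, R x = 0)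
    (S : Fin M → Set ℝ) (hS : ∀ k, MeasurableSet (S k))
    (hRS : ∀ k : Fin M, ∀ x ∈ S k, R x = ((k : ℝ) + 2) * H)
    (hRbd : ∀ x : ℝ, 0 ≤ R x ∧ R x ≤ ((M : ℝ) + 1) * H)
    (hv : Fin M → ℝ) (hvH : ∀ k, |hv k| ≤ H)
    (Rs : ℕ → ℝ → ℝ) (hRM : Rs M = R)
    (hrec : ∀ k : Fin M, ∀ x : ℝ,
      Rs k x = Rs (k + 1) x +
        (hv k - ((k : ℝ) + 2) * H) / H * max 0 (Rs (k + 1) x - ((k : ℝ) + 1) * H)) :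
    (∀ k : Fin M, ∀ x ∈ S k, Rs 0 x = hv k) ∧
    (∀ x : ℝ, R x = 0 → Rs 0 x = 0) ∧
    (∀ x : ℝ, -H ≤ Rs 0 x ∧ Rs 0 x ≤ H) := by
  -- invariant: -H ≤ Rs k x ≤ (k+1)*H for k ≤ M (downward induction, indexed by d = M - k)
  have key : ∀ d k, k + d = M → ∀ x, -H ≤ Rs k x ∧ Rs k x ≤ ((k : ℝ) + 1) * H := by
    intro d
    induction d with
    | zero =>
      intro k hk x
      have : k = M := by omega
      subst this
      rw [hRM]
      obtain ⟨h1, h2⟩ := hRbd x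
      constructor <;> nlinarith
    | succ d ih =>
      intro k hk x
      have hkM : k < M := by omega
      obtain ⟨h1, h2⟩ := ih (k + 1) (by omega) x
      have hr := hrec ⟨k, hkM⟩ x
      simp only [Fin.val_mk] at hr
      push_cast at hr h2
      have hvk := hvH ⟨k, hkM⟩
      rw [abs_le] at hvk
      rw [hr]
      rcases le_or_gt (Rs (k + 1) x) (((k : ℝ) + 1) * H) with h | h
      · rw [max_eq_left (by linarith)]
        push_cast
        constructor <;> nlinarith
      · rw [max_eq_right (by linarith)]
        push_cast
        set t := Rs (k + 1) x with ht
        have hc : (hv ⟨k, hkM⟩ - ((k : ℝ) + 2) * H) / H * H = hv ⟨k, hkM⟩ - ((k : ℝ) + 2) * H :=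
          div_mul_cancel₀ _ (ne_of_gt hH)
        set c := (hv ⟨k, hkM⟩ - ((k : ℝ) + 2) * H) / H with hcd
        have hcle : 1 + c ≤ 0 := by nlinarith
        have hs1 : (0:ℝ) ≤ t - ((k : ℝ) + 1) * H := by linarith
        have hs2 : t - ((k : ℝ) + 1) * H ≤ H := by linarith
        constructor
        · nlinarith [mul_le_mul_of_nonpos_right hs2 hcle]
        · nlinarith [mul_nonneg hs1 (neg_nonneg.mpr hcle)]
  -- preservation: if Rs m x ≤ H then every later step leaves it unchanged
  have pres : ∀ m, m ≤ M → ∀ x, Rs m x ≤ H → Rs 0 x = Rs m x := by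
    intro m
    induction m with
    | zero => intro _ _ _; rfl
    | succ m ih =>
      intro hm x hx
      have hmM : m < M := by omega
      have hr := hrec ⟨m, hmM⟩ x
      simp only [Fin.val_mk] at hr
      have hle : Rs (m + 1) x ≤ ((m : ℝ) + 1) * H := by nlinarith
      rw [max_eq_left (by linarith)] at hr
      simp only [mul_zero, add_zero] at hr
      rw [ih (by omega) x (by rw [hr]; exact hx), hr]
  refine ⟨?_, ?_, ?_⟩
  · intro k x hx
    -- Rs m x = (k+2)H for all k+1 ≤ m ≤ M
    have hdesc : ∀ d m, m + d = M → (k : ℕ) + 1 ≤ m → Rs m x = ((k : ℝ) + 2) * H := by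
      intro d
      induction d with
      | zero =>
        intro m hm _
        have : m = M := by omega
        subst this
        rw [hRM]
        exact hRS k x hx
      | succ d ih =>
        intro m hm hkm
        have hmM : m < M := by omega
        have hr := hrec ⟨m, hmM⟩ x
        simp only [Fin.val_mk] at hr
        have h1 : Rs (m + 1) x = ((k : ℝ) + 2) * H := ih (m + 1) (by omega) (by omega)
        have hmk : ((k : ℝ) + 2) ≤ ((m : ℝ) + 1) := by
          have : (k : ℕ) + 1 ≤ m := hkm
          exact_mod_cast by omega
        rw [h1] at hr
        rw [hr, max_eq_left (by nlinarith)]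
        ring
    have hk1 : Rs ((k : ℕ) + 1) x = ((k : ℝ) + 2) * H := hdesc (M - ((k:ℕ)+1)) _ (by omega) le_rfl
    have hr := hrec k x
    rw [hk1, max_eq_right (by nlinarith), show ((k:ℝ)+2)*H - ((k:ℝ)+1)*H = H by ring,
      div_mul_cancel₀ _ (ne_of_gt hH)] at hr
    have hrk : Rs k x = hv k := by rw [hr]; ring
    have hvk := hvH k
    rw [abs_le] at hvk
    rw [pres k (le_of_lt k.isLt) x (by rw [hrk]; exact hvk.2), hrk]
  · intro x hx
    have h0 : Rs M x = 0 := by rw [hRM]; exact hx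
    rw [pres M le_rfl x (by rw [h0]; linarith), h0]
  · intro x
    have := key M 0 (by omega) x
    simpa using this
end
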